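/- Let K be a field, n ≥ 1, I ⊆ [n-1], and A ∈ ASM^I(n). Then X_A = { Z ∈ Mat_{n×n}(K) : rank(Z_{[i],[j]}) ≤ r_A(i,j) for all i ∈ [n]∖I and all j ∈ [n] }; that is, the rank conditions in rows indexed by I are implied by the remaining ones. -/

import Mathlib

/-- The rank (corner sum) matrix entry `r_A(i,j)` (1-based `i j`, zero when `i = 0` or `j = 0`). -/
def rk (n : ℕ) (A : Matrix (Fin n) (Fin n) ℤ) (i j : ℕ) : ℤ :=
  ∑ p : Fin n, ∑ q : Fin n, if p.1 < i ∧ q.1 < j then A p q else 0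

/-- `A` is an alternating sign matrix: entries in `{-1,0,1}`, the nonzero entries of each row
and column alternate in sign and sum to `1`; equivalently all partial row and column sums are
`0` or `1` and every full row and column sums to `1`. -/
def IsASM (n : ℕ) (A : Matrix (Fin n) (Fin n) ℤ) : Prop :=
  (∀ i j, A i j = -1 ∨ A i j = 0 ∨ A i j = 1) ∧
  (∀ i : Fin n, ∀ j : ℕ, j ≤ n →
      (∑ q : Fin n, if q.1 < j then A i q else 0) = 0 ∨
      (∑ q : Fin n, if q.1 < j then A i q else 0) = 1) ∧
  (∀ j : Fin n, ∀ i : ℕ, i ≤ n →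
      (∑ p : Fin n, if p.1 < i then A p j else 0) = 0 ∨
      (∑ p : Fin n, if p.1 < i then A p j else 0) = 1) ∧
  (∀ i : Fin n, (∑ q : Fin n, A i q) = 1) ∧
  (∀ j : Fin n, (∑ p : Fin n, A p j) = 1)

/-- `A ∈ ASM^I(n)`: `A` is an ASM and for every `i ∈ I` and `j ∈ [n]`,
`r_A(i,j) = r_A(i-1,j) + 1` or `r_A(i,j) = r_A(i+1,j)`. -/
def InASMI (n : ℕ) (I : Finset ℕ) (A : Matrix (Fin n) (Fin n) ℤ) : Prop :=
  IsASM n A ∧ ∀ i ∈ I, ∀ j, 1 ≤ j → j ≤ n →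
    rk n A i j = rk n A (i - 1) j + 1 ∨ rk n A i j = rk n A (i + 1) j

/-- Bruhat order on `ASM(n)`: `A ≤ B` iff `r_A(i,j) ≥ r_B(i,j)` for all `i,j ∈ [n]`. -/
def blE (n : ℕ) (A B : Matrix (Fin n) (Fin n) ℤ) : Prop :=
  ∀ i j, 1 ≤ i → i ≤ n → 1 ≤ j → j ≤ n → rk n B i j ≤ rk n A i j

/-- Permutation matrix of `w`. -/
def permMatrix (n : ℕ) (w : Equiv.Perm (Fin n)) : Matrix (Fin n) (Fin n) ℤ :=
  Matrix.of fun i j => if w i = j then 1 else 0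

/-- `w ∈ S_n^I`: `w(i) < w(i+1)` for all `i ∈ I` (indices 1-based). -/
def IsMinRep (n : ℕ) (I : Finset ℕ) (w : Equiv.Perm (Fin n)) : Prop :=
  ∀ p q : Fin n, (p.1 + 1) ∈ I → q.1 = p.1 + 1 → w p < w q

/-- Identity matrix. -/
def idMat (n : ℕ) : Matrix (Fin n) (Fin n) ℤ :=
  Matrix.of fun i j => if i = j then 1 else 0

/-- Rank of the top-left `i × j` submatrix of `Z` (for `i, j ≤ n`). -/
noncomputable def tlRank {K : Type*} [Field K] (n : ℕ) (Z : Matrix (Fin n) (Fin n) K)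
    (i j : ℕ) : ℕ :=
  (Matrix.of fun (p : Fin i) (q : Fin j) =>
      if h : p.1 < n ∧ q.1 < n then Z ⟨p.1, h.1⟩ ⟨q.1, h.2⟩ else 0).rank

/-- Membership in the ASM variety `X_A`: all top-left ranks of `Z` are bounded by `r_A`. -/
def memX {K : Type*} [Field K] (n : ℕ) (A : Matrix (Fin n) (Fin n) ℤ)
    (Z : Matrix (Fin n) (Fin n) K) : Prop :=
  ∀ i j, 1 ≤ i → i ≤ n → 1 ≤ j → j ≤ n → (tlRank n Z i j : ℤ) ≤ rk n A i j

/-!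
Fix a column `j`. The function `i ↦ rank Z_{[i],[j]}` is monotone and grows by at most one from
one row to the next. So at a row `i ∈ I` with `r_A(i,j) = r_A(i-1,j) + 1` the rank bound follows
from the one in row `i - 1`, and at a row with `r_A(i,j) = r_A(i+1,j)` from the one in row
`i + 1`. Descending through rows of the first kind never meets a row of the second kind (that
would force `r_A(i,j) = r_A(i,j) + 1`), so both searches end at a row outside `I`, where the
bound is assumed.
-/

namespace Matrix

variable {K : Type*} [Field K] {m : ℕ} {ι : Type*} [Fintype ι]

theorem rank_le_rank_submatrix_castSucc_add_one (M : Matrix (Fin (m + 1)) ι K) :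
    M.rank ≤ (M.submatrix Fin.castSucc id).rank + 1 := by
  rw [rank_eq_finrank_span_row, rank_eq_finrank_span_row]
  have hrows :
      Set.range M.row ⊆ Set.range (M.submatrix Fin.castSucc id).row ∪ {M (Fin.last m)} := by
    rintro _ ⟨p, rfl⟩
    induction p using Fin.lastCases with
    | last => exact Or.inr rfl
    | cast p => exact Or.inl ⟨p, rfl⟩
  calc Module.finrank K (Submodule.span K (Set.range M.row))
      ≤ Module.finrank K ↥(Submodule.span K (Set.range (M.submatrix Fin.castSucc id).row) ⊔
          Submodule.span K {M (Fin.last m)}) := by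
        rw [← Submodule.span_union]
        exact Submodule.finrank_mono (Submodule.span_mono hrows)
    _ ≤ _ := by
        grw [Submodule.finrank_add_le_finrank_add_finrank,
          finrank_span_le_card ({M (Fin.last m)} : Set (ι → K))]
        simp

end Matrix

section TopLeftRank

variable {K : Type*} [Field K] (n : ℕ) (Z : Matrix (Fin n) (Fin n) K)

def topLeft (i j : ℕ) : Matrix (Fin i) (Fin j) K :=
  Matrix.of fun p q => if h : p.1 < n ∧ q.1 < n then Z ⟨p.1, h.1⟩ ⟨q.1, h.2⟩ else 0

theorem tlRank_eq_rank_topLeft (i j : ℕ) : tlRank n Z i j = (topLeft n Z i j).rank := rfl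

theorem topLeft_submatrix_castLE {i i' : ℕ} (j : ℕ) (h : i ≤ i') :
    (topLeft n Z i' j).submatrix (Fin.castLE h) id = topLeft n Z i j := rfl

variable (j : ℕ)

theorem tlRank_zero_left : tlRank n Z 0 j = 0 :=
  Nat.le_zero.mp (Matrix.rank_le_height _)

theorem tlRank_monotone : Monotone fun i => tlRank n Z i j := fun _ _ h => by
  simp only [tlRank_eq_rank_topLeft, ← topLeft_submatrix_castLE n Z j h]
  exact Matrix.rank_submatrix_le _ _ _

theorem tlRank_succ_le (i : ℕ) : tlRank n Z (i + 1) j ≤ tlRank n Z i j + 1 :=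
  Matrix.rank_le_rank_submatrix_castSucc_add_one _

end TopLeftRank

theorem rk_zero_left (n : ℕ) (A : Matrix (Fin n) (Fin n) ℤ) (j : ℕ) : rk n A 0 j = 0 := by
  simp [rk]

section JumpCondition

variable {f g : ℕ → ℤ} {N : ℕ} {I : Finset ℕ}

theorem le_of_jump_down (hI : I ⊆ Finset.Icc 1 (N - 1)) (hf : ∀ i, f (i + 1) ≤ f i + 1)
    (hg : ∀ i ∈ I, g i = g (i - 1) + 1 ∨ g i = g (i + 1))
    (hoff : ∀ i ≤ N, i ∉ I → f i ≤ g i) :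
    ∀ i ∈ I, g i = g (i - 1) + 1 → f i ≤ g i := by
  intro i
  induction i with
  | zero => exact fun h0 => absurd (Finset.mem_Icc.mp (hI h0)).1 (by omega)
  | succ i ih =>
    intro hiI hjump
    have hiN : i + 1 ≤ N - 1 := (Finset.mem_Icc.mp (hI hiI)).2
    have hprev : f i ≤ g i := by
      by_cases hi : i ∈ I
      · rcases hg i hi with hdown | hflat
        · exact ih hi hdown
        · simp only [hflat, Nat.add_sub_cancel] at hjump
          omega
      · exact hoff i (by omega) hi
    simp only [Nat.add_sub_cancel] at hjump
    linarith [hf i]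

theorem le_of_jump (hI : I ⊆ Finset.Icc 1 (N - 1)) (hf : Monotone f)
    (hf' : ∀ i, f (i + 1) ≤ f i + 1) (hg : ∀ i ∈ I, g i = g (i - 1) + 1 ∨ g i = g (i + 1))
    (hoff : ∀ i ≤ N, i ∉ I → f i ≤ g i) {i : ℕ} (hi : i ≤ N) : f i ≤ g i := by
  induction hi using Nat.decreasingInduction with
  | self => exact hoff N le_rfl fun hN => absurd (Finset.mem_Icc.mp (hI hN)) (by omega)
  | of_succ i hiN ih =>
    by_cases hiI : i ∈ I
    · rcases hg i hiI with hdown | hflat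
      · exact le_of_jump_down hI hf' hg hoff i hiI hdown
      · exact hflat ▸ (hf i.le_succ).trans ih
    · exact hoff i hiN.le hiI

end JumpCondition

theorem stmt7_general (K : Type*) [Field K] (n : ℕ)
    (I : Finset ℕ) (hI : I ⊆ Finset.Icc 1 (n - 1))
    (A : Matrix (Fin n) (Fin n) ℤ) (hA : InASMI n I A)
    (Z : Matrix (Fin n) (Fin n) K) :
    memX n A Z ↔
      ∀ i, 1 ≤ i → i ≤ n → i ∉ I → ∀ j, 1 ≤ j → j ≤ n →
        (tlRank n Z i j : ℤ) ≤ rk n A i j := by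
  refine ⟨fun hZ i hi1 hin _ j hj1 hjn => hZ i j hi1 hin hj1 hjn,
    fun hoff i j hi1 hin hj1 hjn => ?_⟩
  refine le_of_jump (f := fun i => (tlRank n Z i j : ℤ)) hI
    (fun _ _ h => Nat.cast_le.mpr (tlRank_monotone n Z j h))
    (fun i => mod_cast tlRank_succ_le n Z j i) (fun i hi => hA.2 i hi j hj1 hjn)
    (fun i hiN hiI => ?_) hin
  rcases Nat.eq_zero_or_pos i with rfl | hi
  · simp [tlRank_zero_left, rk_zero_left]
  · exact hoff i hi hiN hiI j hj1 hjn

/-- For `A ∈ ASM^I(n)`, membership in `X_A` is equivalent to the rank conditions in the rows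
outside `I`: the rank conditions in rows indexed by `I` are implied by the remaining ones. -/
theorem stmt7 (K : Type*) [Field K] (n : ℕ) (hn : 1 ≤ n)
    (I : Finset ℕ) (hI : I ⊆ Finset.Icc 1 (n - 1))
    (A : Matrix (Fin n) (Fin n) ℤ) (hA : InASMI n I A)
    (Z : Matrix (Fin n) (Fin n) K) :
    memX n A Z ↔
      ∀ i, 1 ≤ i → i ≤ n → i ∉ I → ∀ j, 1 ≤ j → j ≤ n →
        (tlRank n Z i j : ℤ) ≤ rk n A i j :=
  stmt7_general K n I hI A hA Z
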